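/- arXiv:1502.06869 — 4 statements merged into one kernel-verified Lean document; each statement's English description precedes it below -/
import Mathlib

section
/- For the standard generalized Fibonacci sequence with gcd(a,b) = 1, we have gcd(F_m, F_n) = F_{gcd(m,n)} for all m, n ≥ 1 (up to sign, i.e., the gcd of |F_m| and |F_n| equals |F_{gcd(m,n)}|). -/
/-! The sequence satisfies the addition formula
`F (m + n + 1) = F (m + 1) * F (n + 1) + b * F m * F n`, and, since `a` and `b` are coprime,
each `F (n + 1)` is coprime to `b` and consecutive terms are coprime.
Reducing the addition formula modulo `F m` therefore gives
`gcd (F m) (F (n + m)) = gcd (F m) (F n)`, so the indices obey the Euclidean algorithm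
and `gcd (F m) (F n) = |F (gcd m n)|`. -/

theorem Int.gcd_mul_right_cancel_right_of_isCoprime {m n k : ℤ} (h : IsCoprime k m) :
    Int.gcd m (n * k) = Int.gcd m n := by
  rw [Int.isCoprime_iff_gcd_eq_one] at h
  rw [Int.gcd_def, Int.natAbs_mul, Nat.Coprime.gcd_mul_right_cancel_right _ h, ← Int.gcd_def]

section StrongDivisibility

variable {F : ℕ → ℤ}

theorem gcd_apply_add_mul_self (hadd : ∀ m n, Int.gcd (F m) (F (n + m)) = Int.gcd (F m) (F n))
    (m n k : ℕ) : Int.gcd (F m) (F (n + k * m)) = Int.gcd (F m) (F n) := by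
  induction k with
  | zero => simp
  | succ k ih => rw [add_mul, one_mul, ← add_assoc, hadd, ih]

theorem gcd_apply_eq_natAbs_apply_gcd (h0 : F 0 = 0)
    (hadd : ∀ m n, Int.gcd (F m) (F (n + m)) = Int.gcd (F m) (F n)) (m n : ℕ) :
    Int.gcd (F m) (F n) = (F (Nat.gcd m n)).natAbs := by
  induction m, n using Nat.gcd.induction with
  | H0 n => simp [h0]
  | H1 m n _ ih =>
    rw [Nat.gcd_rec, ← ih, Int.gcd_comm (F (n % m))]
    conv_lhs => rw [← Nat.mod_add_div' n m]
    exact gcd_apply_add_mul_self hadd m (n % m) (n / m)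

end StrongDivisibility

section LucasSequence

variable {a b : ℤ} {F : ℕ → ℤ}

theorem lucas_add (hF0 : F 0 = 0) (hF1 : F 1 = 1)
    (hF : ∀ n, F (n + 2) = a * F (n + 1) + b * F n) (m n : ℕ) :
    F (m + n + 1) = F (m + 1) * F (n + 1) + b * F m * F n := by
  induction m using Nat.twoStepInduction generalizing n with
  | zero => simp [hF0, hF1]
  | one =>
    rw [show 1 + n + 1 = n + 2 by ring, hF, hF 0, hF0, hF1]
    ring
  | more k ih₀ ih₁ =>
    rw [show k + 2 + n + 1 = k + n + 1 + 2 by ring, hF, show k + n + 1 + 1 = k + 1 + n + 1 by ring,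
      ih₀, ih₁, hF (k + 1), hF k]
    ring

theorem isCoprime_lucas_succ_coeff (hab : IsCoprime a b) (hF1 : F 1 = 1)
    (hF : ∀ n, F (n + 2) = a * F (n + 1) + b * F n) (n : ℕ) : IsCoprime (F (n + 1)) b := by
  induction n with
  | zero =>
    rw [hF1]
    exact isCoprime_one_left
  | succ k ih =>
    rw [hF, mul_comm b, IsCoprime.add_mul_right_left_iff]
    exact hab.mul_left ih

theorem isCoprime_lucas_lucas_succ (hab : IsCoprime a b) (hF0 : F 0 = 0) (hF1 : F 1 = 1)
    (hF : ∀ n, F (n + 2) = a * F (n + 1) + b * F n) (n : ℕ) : IsCoprime (F n) (F (n + 1)) := by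
  induction n with
  | zero =>
    rw [hF0, hF1]
    exact isCoprime_one_right
  | succ k ih =>
    rw [hF, mul_comm a, IsCoprime.mul_add_left_right_iff]
    exact (isCoprime_lucas_succ_coeff hab hF1 hF k).mul_right ih.symm

theorem gcd_lucas_add_self (hab : IsCoprime a b) (hF0 : F 0 = 0) (hF1 : F 1 = 1)
    (hF : ∀ n, F (n + 2) = a * F (n + 1) + b * F n) (m n : ℕ) :
    Int.gcd (F m) (F (n + m)) = Int.gcd (F m) (F n) := by
  cases n with
  | zero => simp [hF0]
  | succ k =>
    rw [show k + 1 + m = k + m + 1 by ring, lucas_add hF0 hF1 hF,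
      Int.gcd_add_mul_right_right, Int.gcd_mul_right_cancel_right_of_isCoprime]
    exact (isCoprime_lucas_lucas_succ hab hF0 hF1 hF m).symm

end LucasSequence

theorem general_fib_gcd (a b : ℤ) (hab : Int.gcd a b = 1)
    (F : ℕ → ℤ) (hF0 : F 0 = 0) (hF1 : F 1 = 1)
    (hF : ∀ n, F (n + 2) = a * F (n + 1) + b * F n) :
    ∀ m n : ℕ, 1 ≤ m → 1 ≤ n →
      Int.gcd (F m) (F n) = (F (Nat.gcd m n)).natAbs := by
  intro m n _ _
  exact gcd_apply_eq_natAbs_apply_gcd hF0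
    (gcd_lucas_add_self (Int.isCoprime_iff_gcd_eq_one.mpr hab) hF0 hF1 hF) m n
end

section
/- If an integer n > 0 is a sum of two coprime squares, then every positive divisor of n is a sum of two squares. -/
theorem divisor_of_coprime_bisquare (n : ℤ) (hn : 0 < n)
    (x y : ℤ) (hxy : Int.gcd x y = 1) (h : n = x ^ 2 + y ^ 2) :
    ∀ d : ℤ, 0 < d → d ∣ n → ∃ p q : ℤ, d = p ^ 2 + q ^ 2 := by
  intro d hd hdn
  have hcop : IsCoprime x y := Int.isCoprime_iff_gcd_eq_one.mpr hxy
  have hs : IsSquare (-1 : ZMod n.natAbs) :=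
    ZMod.isSquare_neg_one_of_eq_sq_add_sq_of_isCoprime h hcop
  have hdvd : d.natAbs ∣ n.natAbs := Int.natAbs_dvd_natAbs.mpr hdn
  have hs' : IsSquare (-1 : ZMod d.natAbs) := ZMod.isSquare_neg_one_of_dvd hdvd hs
  obtain ⟨p, q, hpq⟩ := Nat.eq_sq_add_sq_of_isSquare_mod_neg_one hs'
  refine ⟨p, q, ?_⟩
  have : (d.natAbs : ℤ) = (p : ℤ) ^ 2 + (q : ℤ) ^ 2 := by exact_mod_cast hpq
  rwa [Int.natAbs_of_nonneg hd.le] at this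
end

section
/- Let a, b be positive integers with (a, b) ≠ (1, 1) and F the standard generalized Fibonacci sequence. Then for every odd n ≥ 1, the number of divisors of F_n is at least the number of divisors of n: τ(F_n) ≥ τ(n). -/
/-!
`d ↦ F d` maps the divisors of `n` into the divisors of `F n`, because `(F n)` is a divisibility
sequence (a consequence of the addition formula). For odd `n` all these divisors are odd, and
`F` is strictly increasing along odd indices since `F (n + 2) ≥ a F (n + 1) + F n > F n`, so the
map is injective.
-/

structure IsLucasSeq {R : Type*} [CommSemiring R] (a b : R) (F : ℕ → R) : Prop where
  zero : F 0 = 0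
  one : F 1 = 1
  add_two : ∀ n, F (n + 2) = a * F (n + 1) + b * F n

namespace IsLucasSeq

section CommSemiring

variable {R : Type*} [CommSemiring R] {a b : R} {F : ℕ → R}

theorem two (hF : IsLucasSeq a b F) : F 2 = a := by
  simpa [hF.zero, hF.one] using hF.add_two 0

theorem add_add_one (hF : IsLucasSeq a b F) (m n : ℕ) :
    F (m + n + 1) = F (m + 1) * F (n + 1) + b * F m * F n := by
  induction n using Nat.twoStepInduction with
  | zero => simp [hF.zero, hF.one]
  | one => rw [hF.add_two m, hF.one, hF.two]; ring
  | more n ih₀ ih₁ =>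
    rw [show m + (n + 2) + 1 = m + n + 1 + 2 by ring, hF.add_two, ih₀,
      show m + n + 1 + 1 = m + (n + 1) + 1 by ring, ih₁,
      show n + 2 + 1 = n + 1 + 2 by rfl, hF.add_two (n + 1), hF.add_two n]
    ring

theorem dvd_mul (hF : IsLucasSeq a b F) (m k : ℕ) : F m ∣ F (m * k) := by
  induction k with
  | zero => simp [hF.zero]
  | succ k ih =>
    obtain _ | m := m
    · simp
    rw [Nat.mul_succ, ← add_assoc, hF.add_add_one]
    exact dvd_add (dvd_mul_left _ _) ((ih.mul_left _).mul_right _)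

theorem dvd_of_dvd (hF : IsLucasSeq a b F) {m n : ℕ} (h : m ∣ n) : F m ∣ F n := by
  obtain ⟨k, rfl⟩ := h
  exact hF.dvd_mul m k

end CommSemiring

section Nat

variable {a b : ℕ} {F : ℕ → ℕ}

theorem pos (hF : IsLucasSeq a b F) (ha : 0 < a) (n : ℕ) : 0 < F (n + 1) := by
  induction n with
  | zero => simp [hF.one]
  | succ n ih =>
    rw [hF.add_two]
    exact Nat.add_pos_left (Nat.mul_pos ha ih) _

theorem lt_add_two (hF : IsLucasSeq a b F) (ha : 0 < a) (hb : 0 < b) (n : ℕ) :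
    F (n + 1) < F (n + 1 + 2) := by
  have hpos := Nat.mul_pos ha (hF.pos ha (n + 1))
  have hle : F (n + 1) ≤ b * F (n + 1) := Nat.le_mul_of_pos_left _ hb
  rw [hF.add_two]
  omega

theorem strictMono_odd (hF : IsLucasSeq a b F) (ha : 0 < a) (hb : 0 < b) :
    StrictMono fun k ↦ F (2 * k + 1) :=
  strictMono_nat_of_lt_succ fun k ↦ hF.lt_add_two ha hb (2 * k)

theorem injOn_odd (hF : IsLucasSeq a b F) (ha : 0 < a) (hb : 0 < b) :
    Set.InjOn F {n | Odd n} := by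
  rintro _ ⟨i, rfl⟩ _ ⟨j, rfl⟩ h
  rw [(hF.strictMono_odd ha hb).injective h]

end Nat

end IsLucasSeq

theorem tau_fib_ge_tau_odd_general (a b : ℕ) (ha : 0 < a) (hb : 0 < b)
    (F : ℕ → ℕ) (hF0 : F 0 = 0) (hF1 : F 1 = 1)
    (hF : ∀ n, F (n + 2) = a * F (n + 1) + b * F n) :
    ∀ n : ℕ, Odd n → 1 ≤ n → n.divisors.card ≤ (F n).divisors.card := by
  intro n hn hn1
  have hF : IsLucasSeq a b F := ⟨hF0, hF1, hF⟩
  have hFn : F n ≠ 0 := by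
    obtain ⟨m, rfl⟩ := Nat.exists_eq_add_of_le' hn1
    exact (hF.pos ha m).ne'
  apply Finset.card_le_card_of_injOn F
  · intro d hd
    exact Nat.mem_divisors.mpr ⟨hF.dvd_of_dvd (Nat.dvd_of_mem_divisors hd), hFn⟩
  · exact (hF.injOn_odd ha hb).mono fun d hd ↦ hn.of_dvd_nat (Nat.dvd_of_mem_divisors hd)

theorem tau_fib_ge_tau_odd (a b : ℕ) (ha : 0 < a) (hb : 0 < b)
    (hab : ¬(a = 1 ∧ b = 1))
    (F : ℕ → ℕ) (hF0 : F 0 = 0) (hF1 : F 1 = 1)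
    (hF : ∀ n, F (n + 2) = a * F (n + 1) + b * F n) :
    ∀ n : ℕ, Odd n → 1 ≤ n → n.divisors.card ≤ (F n).divisors.card :=
  tau_fib_ge_tau_odd_general a b ha hb F hF0 hF1 hF
end

section
/- Let a, b be positive integers and F the standard generalized Fibonacci sequence. For every n ≥ 1, τ(F_n) ≥ τ(n) − 1, where τ is the number-of-divisors function. -/
theorem tau_fib_ge_tau_sub_one (a b : ℕ) (ha : 0 < a) (hb : 0 < b)
    (F : ℕ → ℕ) (hF0 : F 0 = 0) (hF1 : F 1 = 1)
    (hF : ∀ n, F (n + 2) = a * F (n + 1) + b * F n) :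
    ∀ n : ℕ, 1 ≤ n → n.divisors.card - 1 ≤ (F n).divisors.card := by
  -- positivity
  have hpos : ∀ n, 0 < F (n + 1) := by
    intro n
    induction n with
    | zero => simp [hF1]
    | succ m ih =>
      rw [hF]
      have : 0 < a * F (m + 1) := Nat.mul_pos ha ih
      omega
  -- strict monotonicity from index 2
  have hlt : ∀ m, F (m + 2) < F (m + 3) := by
    intro m
    have := hF (m + 1)
    have h1 : 0 < F (m + 1) := hpos m
    have h2 : 0 < F (m + 2) := hpos (m + 1)
    have ha1 : 1 ≤ a := ha
    have hb1 : 1 ≤ b := hb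
    have : a * F (m + 2) ≥ F (m + 2) := Nat.le_mul_of_pos_left _ ha
    have : b * F (m + 1) ≥ F (m + 1) := Nat.le_mul_of_pos_left _ hb
    have heq : F (m + 3) = a * F (m + 2) + b * F (m + 1) := hF (m + 1)
    nlinarith
  have hsm : StrictMono (fun n => F (n + 2)) := strictMono_nat_of_lt_succ hlt
  -- addition formula
  have hadd : ∀ k m, F (m + k + 1) = F (k + 1) * F (m + 1) + b * F k * F m := by
    intro k
    induction k using Nat.twoStepInduction with
    | zero => intro m; simp [hF0, hF1]
    | one =>
      intro m
      have h2 : F 2 = a := by rw [hF]; simp [hF0, hF1]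
      rw [show m + 1 + 1 = m + 2 from rfl, hF m, h2, hF1]
      ring
    | more k ih1 ih2 =>
      intro m
      have e1 : m + (k + 2) + 1 = (m + k + 1) + 2 := by ring
      have e2 : F (k + 3) = a * F (k + 2) + b * F (k + 1) := hF (k + 1)
      rw [e1, hF (m + k + 1), show m + k + 1 + 1 = m + (k+1) + 1 from by ring,
        ih2, ih1, e2, hF k]
      ring
  -- divisibility
  have hdvd : ∀ m t, F m ∣ F (m * t) := by
    intro m t
    induction t with
    | zero => simp [hF0]
    | succ s ih =>
      rcases Nat.eq_zero_or_pos m with hm | hm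
      · simp [hm]
      · obtain ⟨e, rfl⟩ := Nat.exists_eq_add_of_lt hm
        simp only [Nat.zero_add] at ih ⊢
        rw [show (e + 1) * (s + 1) = (e + 1) * s + e + 1 from by ring,
          hadd e ((e + 1) * s)]
        exact dvd_add (dvd_mul_right _ _) (Dvd.dvd.mul_left ih _)
  intro n hn
  have hFn : 0 < F n := by
    obtain ⟨m, rfl⟩ := Nat.exists_eq_add_of_le hn
    rw [Nat.add_comm]; exact hpos m
  have h1mem : 1 ∈ n.divisors := Nat.one_mem_divisors.mpr (by omega)
  set S := n.divisors.erase 1 with hS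
  have hcard : S.card = n.divisors.card - 1 := Finset.card_erase_of_mem h1mem
  have hinj : Set.InjOn F S := by
    intro x hx y hy hxy
    have hx2 : 2 ≤ x := by
      have := Nat.pos_of_mem_divisors (Finset.mem_of_mem_erase hx)
      have := Finset.ne_of_mem_erase hx
      omega
    have hy2 : 2 ≤ y := by
      have := Nat.pos_of_mem_divisors (Finset.mem_of_mem_erase hy)
      have := Finset.ne_of_mem_erase hy
      omega
    obtain ⟨x', rfl⟩ := Nat.exists_eq_add_of_le hx2
    obtain ⟨y', rfl⟩ := Nat.exists_eq_add_of_le hy2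
    have := hsm.injective (a₁ := x') (a₂ := y') (by
      simpa [Nat.add_comm] using hxy)
    omega
  have hsub : S.image F ⊆ (F n).divisors := by
    intro m hm
    obtain ⟨d, hd, rfl⟩ := Finset.mem_image.mp hm
    have hdn : d ∣ n := Nat.dvd_of_mem_divisors (Finset.mem_of_mem_erase hd)
    obtain ⟨t, rfl⟩ := hdn
    exact Nat.mem_divisors.mpr ⟨hdvd d t, hFn.ne'⟩
  calc n.divisors.card - 1 = S.card := hcard.symm
    _ = (S.image F).card := (Finset.card_image_of_injOn hinj).symm
    _ ≤ (F n).divisors.card := Finset.card_le_card hsub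
end
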